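/- Let C_7 = R·(b_1(x) + ug_1(x) + u²g_2(x)) + R·(ub_2(x) + u²g_3(x)) be a left ideal of Type 7 of R := R^{3,x^{p^s}−λ}_Θ, i.e. b_1(x), b_2(x) ∈ B_λ^1 of degree ≤ p^s−1 and g_1(x), g_2(x), g_3(x) ∈ F_{p^m}[x,θ]/⟨(λ_{0,0}x−1)^{p^s}⟩, satisfying: whenever ub(x) + u²g(x) ∈ R·(b_1(x)+ug_1(x)+u²g_2(x)) for some b(x), g(x) ∈ F_{p^m}[x,θ]/⟨(λ_{0,0}x−1)^{p^s}⟩, then b_2(x) |_r b(x). Then Tor_1(C_7) = (F_{p^m}[x,θ]/⟨(λ_{0,0}x−1)^{p^s}⟩)·b_2(x). -/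
import Mathlib


open Polynomial

namespace SkewPaper

variable (p m t : ℕ) [Fact p.Prime]

/-- The finite field `F_{p^m}`. -/
abbrev Fq : Type := GaloisField p m

/-- The finite chain ring `R^t = F_{p^m}[u]/⟨u^t⟩`. -/
abbrev Rt : Type :=
  Polynomial (Fq p m) ⧸ Ideal.span {(Polynomial.X : Polynomial (Fq p m)) ^ t}

/-- The element `u` of `R^t`. -/
noncomputable def uE : Rt p m t := Ideal.Quotient.mk _ Polynomial.X

/-- The canonical embedding `F_{p^m} → R^t`. -/
noncomputable def eps : Fq p m →+* Rt p m t :=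
  (Ideal.Quotient.mk _).comp Polynomial.C

/-- The automorphism `Θ` of `R^t` extending `θ` with `Θ(u) = u`,
i.e. `Θ(a₀ + a₁u + ⋯ + a_{t-1}u^{t-1}) = θ(a₀) + θ(a₁)u + ⋯ + θ(a_{t-1})u^{t-1}`. -/
noncomputable def Th (theta : Fq p m ≃+* Fq p m) : Rt p m t ≃+* Rt p m t :=
  Ideal.quotientEquiv _ _ (Polynomial.mapEquiv theta) (by
    rw [Ideal.map_span, Set.image_singleton]
    simp [Polynomial.mapEquiv_apply])

/-- Reduction of `R^t` modulo `u`. -/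
noncomputable def rdc (ht : 0 < t) : Rt p m t →+* Fq p m :=
  Ideal.Quotient.lift _ (Polynomial.evalRingHom 0) (by
    intro a ha
    rw [Ideal.mem_span_singleton] at ha
    obtain ⟨b, rfl⟩ := ha
    simp [zero_pow ht.ne'])

/-- `a` right-divides `b`, i.e. `b = h * a` for some `h`. -/
def RDvd {A : Type*} [Mul A] (a b : A) : Prop := ∃ h, b = h * a

/-- The element `Σᵢ ι(cᵢ) X^i` determined by a coefficient family `c`. -/
noncomputable def spoly {R A : Type*} [Semiring R] [Semiring A] (iot : R →+* A) (X : A)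
    (c : ℕ →₀ R) : A :=
  c.sum fun i a => iot a * X ^ i

/-- Lift `Σᵢ ι(ε(cᵢ)) X^i` of a skew polynomial over `F_{p^m}` to the skew polynomial ring
over `R^t` (coefficient-wise, via the embedding `F_{p^m} → R^t`). -/
noncomputable def liftP {A : Type*} [Semiring A] (iot : Rt p m t →+* A) (X : A)
    (c : ℕ →₀ Fq p m) : A :=
  c.sum fun i a => iot (eps p m t a) * X ^ i

/-- `λ = λ₀ + uλ₁ + ⋯ + u^{t-1}λ_{t-1}` as an element of `R^t`. -/
noncomputable def lamOf (lc : ℕ → Fq p m) : Rt p m t :=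
  ∑ i ∈ Finset.range t, eps p m t (lc i) * uE p m t ^ i

/-- The order `|Θ|` of `Θ` in the automorphism group of `R^t`. -/
noncomputable def thOrder (theta : Fq p m ≃+* Fq p m) : ℕ :=
  orderOf (G := RingAut (Rt p m t)) (Th p m t theta)

/-- The order `|θ|` of `θ` in the automorphism group of `F_{p^m}`. -/
noncomputable def thetaOrder (theta : Fq p m ≃+* Fq p m) : ℕ :=
  orderOf (G := RingAut (Fq p m)) theta

/-- The central polynomial `f(x) = Σᵢ fᵢ x^{i·|Θ|}` in the skew polynomial ring. -/
noncomputable def fOf {A : Type*} [Ring A] (theta : Fq p m ≃+* Fq p m)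
    (iot : Rt p m t →+* A) (X : A) (fc : ℕ →₀ Rt p m t) : A :=
  fc.sum fun i a => iot a * X ^ (i * thOrder p m t theta)

/-- The image of `u` in the quotient `R^{t,f}_Θ`. -/
noncomputable def uQ {P Q : Type*} [Semiring P] [Semiring Q] (iot : Rt p m t →+* P)
    (piQ : P →+* Q) : Q :=
  piQ (iot (uE p m t))

/-- The image in `R^{t,f}_Θ` of the lift of a skew polynomial over `F_{p^m}`. -/
noncomputable def lQ {P Q : Type*} [Semiring P] [Semiring Q] (iot : Rt p m t →+* P) (X : P)
    (piQ : P →+* Q) (c : ℕ →₀ Fq p m) : Q :=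
  piQ (liftP p m t iot X c)

/-- The class in `F_{p^m}[x,θ]/⟨f̄⟩` of the skew polynomial with coefficients `c`. -/
noncomputable def lQf {Pf Qf : Type*} [Semiring Pf] [Semiring Qf] (iotf : Fq p m →+* Pf)
    (Xf : Pf) (pif : Pf →+* Qf) (c : ℕ →₀ Fq p m) : Qf :=
  pif (spoly iotf Xf c)

/-- `b(x)` right-divides `c(x)` in the quotient `F_{p^m}[x,θ]/⟨f̄⟩`. -/
def RDvdC {Pf Qf : Type*} [Semiring Pf] [Semiring Qf] (iotf : Fq p m →+* Pf) (Xf : Pf)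
    (pif : Pf →+* Qf) (b c : ℕ →₀ Fq p m) : Prop :=
  ∃ h : Qf, lQf p m iotf Xf pif c = h * lQf p m iotf Xf pif b

/-- Membership in `B_w`: representative of degree `≤ D - 1` which right-divides `w`. -/
def InB {Pf : Type*} [Semiring Pf] (iotf : Fq p m →+* Pf) (Xf : Pf) (w : Pf) (D : ℕ)
    (c : ℕ →₀ Fq p m) : Prop :=
  (∀ i, D ≤ i → c i = 0) ∧ RDvd (spoly iotf Xf c) w

/-- `deg c < deg d` for coefficient families. -/
def degLt {R : Type*} [Zero R] (c d : ℕ →₀ R) : Prop := c.support.max < d.support.max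

/-- "Type (ii)" left ideals of `R^{t,f}_Θ`: those of the form
`Σⱼ R (u^{(t-1)-i_j} b_{i_j}(x) - u^{(t-1)-(i_j-1)} g_{i_j}(x))` with
`0 ≤ i₁ < ⋯ < i_n ≤ t-2`, `b_{i_j} ∈ B_w` of degree `≤ D - 1`, together with the
right-divisibility side condition. -/
def TypeTwo (p m t : ℕ) [Fact p.Prime] {P Pf Q Qf : Type*} [Ring P] [Ring Pf] [Ring Q] [Ring Qf]
    (iot : Rt p m t →+* P) (Xp : P) (piQ : P →+* Q)
    (iotf : Fq p m →+* Pf) (Xf : Pf) (pif : Pf →+* Qf)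
    (w : Pf) (D : ℕ) (J : Ideal Q) : Prop :=
  ∃ (n : ℕ) (idx : Fin n → ℕ) (bcs : Fin n → (ℕ →₀ Fq p m)) (gs : Fin n → Q),
    StrictMono idx ∧ (∀ j, idx j ≤ t - 2) ∧ (∀ j, InB p m iotf Xf w D (bcs j)) ∧
    J = Submodule.span Q (Set.range fun j : Fin n =>
        uQ p m t iot piQ ^ (t - 1 - idx j) * lQ p m t iot Xp piQ (bcs j)
          - uQ p m t iot piQ ^ (t - idx j) * gs j) ∧
    ∀ (j k : Fin n), j < k → ∀ (cc : ℕ →₀ Fq p m) (g : Q),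
      uQ p m t iot piQ ^ (t - 1 - idx j) * lQ p m t iot Xp piQ cc
          + uQ p m t iot piQ ^ (t - idx j) * g ∈
        Submodule.span Q ((fun l : Fin n =>
          uQ p m t iot piQ ^ (t - 1 - idx l) * lQ p m t iot Xp piQ (bcs l)
            - uQ p m t iot piQ ^ (t - idx l) * gs l) '' {l | k ≤ l}) →
      RDvdC p m iotf Xf pif (bcs j) cc

section Aux

theorem Th_uE (theta : Fq p m ≃+* Fq p m) : Th p m t theta (uE p m t) = uE p m t := by
  simp [Th, uE, Ideal.quotientEquiv_mk, Polynomial.mapEquiv_apply]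

theorem rdc_eps (ht : 0 < t) (a : Fq p m) : rdc p m t ht (eps p m t a) = a := by
  simp [rdc, eps]

theorem rdc_uE (ht : 0 < t) : rdc p m t ht (uE p m t) = 0 := by
  simp [rdc, uE]

theorem uE_pow_three : uE p m 3 * (uE p m 3 * uE p m 3) = 0 := by
  rw [uE, ← map_mul, ← map_mul]
  rw [Ideal.Quotient.eq_zero_iff_mem, Ideal.mem_span_singleton]
  exact ⟨1, by ring⟩

theorem Rt_decomp (r : Rt p m 3) :
    ∃ e, r = eps p m 3 (rdc p m 3 three_pos r) + uE p m 3 * e := by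
  obtain ⟨f, rfl⟩ := Ideal.Quotient.mk_surjective r
  obtain ⟨g, hg⟩ : (X : Polynomial (Fq p m)) ∣ f - C (f.coeff 0) := by
    rw [Polynomial.X_dvd_iff]; simp
  have h1 : rdc p m 3 three_pos (Ideal.Quotient.mk _ f) = f.coeff 0 := by
    simp [rdc, ← Polynomial.coeff_zero_eq_eval_zero]
  refine ⟨Ideal.Quotient.mk _ g, ?_⟩
  rw [h1, eps, uE]
  have hf : f = C (f.coeff 0) + X * g := by
    have := hg
    linear_combination (norm := ring_nf) hg
  conv_lhs => rw [hf]
  simp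

theorem uE_X_comm {P : Type*} [Ring P] (theta : Fq p m ≃+* Fq p m)
    (iot : Rt p m t →+* P) (Xp : P)
    (hXiot : ∀ r, Xp * iot r = iot (Th p m t theta r) * Xp) (i : ℕ) :
    iot (uE p m t) * Xp ^ i = Xp ^ i * iot (uE p m t) := by
  have hc : Xp * iot (uE p m t) = iot (uE p m t) * Xp := by
    rw [hXiot, Th_uE]
  induction i with
  | zero => simp
  | succ n ih =>
    rw [pow_succ, ← mul_assoc, ih, mul_assoc, ← hc, ← mul_assoc]

theorem uE_central {P : Type*} [Ring P] (theta : Fq p m ≃+* Fq p m)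
    (iot : Rt p m t →+* P) (Xp : P)
    (hXiot : ∀ r, Xp * iot r = iot (Th p m t theta r) * Xp) (d : ℕ →₀ Rt p m t) :
    iot (uE p m t) * spoly iot Xp d = spoly iot Xp d * iot (uE p m t) := by
  rw [spoly, Finsupp.sum, Finset.mul_sum, Finset.sum_mul]
  refine Finset.sum_congr rfl fun i _ => ?_
  rw [← mul_assoc, ← map_mul, mul_comm (uE p m t), map_mul, mul_assoc,
    uE_X_comm p m t theta iot Xp hXiot, ← mul_assoc]

theorem uQ_central {P Q : Type*} [Ring P] [Ring Q] (theta : Fq p m ≃+* Fq p m)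
    (iot : Rt p m t →+* P) (Xp : P)
    (hXiot : ∀ r, Xp * iot r = iot (Th p m t theta r) * Xp)
    (hPrep : ∀ g : P, ∃ c : ℕ →₀ Rt p m t, g = spoly iot Xp c)
    (piQ : P →+* Q) (hpiQ : Function.Surjective piQ) (q : Q) :
    uQ p m t iot piQ * q = q * uQ p m t iot piQ := by
  obtain ⟨g, rfl⟩ := hpiQ q
  obtain ⟨d, rfl⟩ := hPrep g
  rw [uQ, ← map_mul, ← map_mul, uE_central p m t theta iot Xp hXiot]

theorem mu_lQ {P Pf Q Qf : Type*} [Ring P] [Ring Pf] [Ring Q] [Ring Qf]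
    (iot : Rt p m t →+* P) (Xp : P) (piQ : P →+* Q)
    (iotf : Fq p m →+* Pf) (Xf : Pf) (pif : Pf →+* Qf) (ht : 0 < t)
    (nu : P →+* Pf) (hnu1 : ∀ r, nu (iot r) = iotf (rdc p m t ht r)) (hnu2 : nu Xp = Xf)
    (mu : Q →+* Qf) (hmu : ∀ cP : P, mu (piQ cP) = pif (nu cP)) (c : ℕ →₀ Fq p m) :
    mu (lQ p m t iot Xp piQ c) = lQf p m iotf Xf pif c := by
  rw [lQ, hmu, lQf]
  congr 1
  rw [liftP, map_finsuppSum, spoly]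
  refine Finsupp.sum_congr fun i _ => ?_
  rw [map_mul, map_pow, hnu1, hnu2, rdc_eps]

theorem mu_uQ {P Pf Q Qf : Type*} [Ring P] [Ring Pf] [Ring Q] [Ring Qf]
    (iot : Rt p m t →+* P) (piQ : P →+* Q)
    (iotf : Fq p m →+* Pf) (pif : Pf →+* Qf) (ht : 0 < t)
    (nu : P →+* Pf) (hnu1 : ∀ r, nu (iot r) = iotf (rdc p m t ht r))
    (mu : Q →+* Qf) (hmu : ∀ cP : P, mu (piQ cP) = pif (nu cP)) :
    mu (uQ p m t iot piQ) = 0 := by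
  rw [uQ, hmu, hnu1, rdc_uE, map_zero, map_zero]

theorem decompQ {P Q : Type*} [Ring P] [Ring Q] (iot : Rt p m 3 →+* P) (Xp : P)
    (hPrep : ∀ g : P, ∃ c : ℕ →₀ Rt p m 3, g = spoly iot Xp c)
    (piQ : P →+* Q) (hpiQ : Function.Surjective piQ) (q : Q) :
    ∃ (c : ℕ →₀ Fq p m) (r : Q),
      q = lQ p m 3 iot Xp piQ c + uQ p m 3 iot piQ * r := by
  classical
  obtain ⟨g, rfl⟩ := hpiQ q
  obtain ⟨d, rfl⟩ := hPrep g
  set e : ℕ → Rt p m 3 := fun i => Classical.choose (Rt_decomp p m (d i)) with he'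
  have he : ∀ i, d i = eps p m 3 (rdc p m 3 three_pos (d i)) + uE p m 3 * e i :=
    fun i => Classical.choose_spec (Rt_decomp p m (d i))
  refine ⟨d.mapRange (rdc p m 3 three_pos) (map_zero _),
    piQ (∑ i ∈ d.support, iot (e i) * Xp ^ i), ?_⟩
  rw [lQ, liftP, Finsupp.sum_mapRange_index (by simp), uQ, ← map_mul, ← map_add]
  congr 1
  rw [spoly, Finsupp.sum, Finsupp.sum, Finset.mul_sum, ← Finset.sum_add_distrib]
  refine Finset.sum_congr rfl fun i _ => ?_
  rw [← mul_assoc, ← map_mul, ← add_mul, ← map_add, ← he]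

end Aux

/-- For a Type-7 left ideal `C₇` of `R^{3,x^{p^s}-λ}_Θ`,
`Tor₁(C₇) = (F_{p^m}[x,θ]/⟨(λ₀₀x-1)^{p^s}⟩) b₂(x)`. -/
theorem statement16 (p m s : ℕ) [Fact p.Prime] (hm : 0 < m) (hs : 0 < s)
    (theta : Fq p m ≃+* Fq p m)
    (lc : ℕ → Fq p m) (hl0 : lc 0 ≠ 0)
    (hTlam : Th p m 3 theta (lamOf p m 3 lc) = lamOf p m 3 lc)
    (hord : thOrder p m 3 theta ∣ p ^ s)
    {P : Type*} [Ring P] (iot : Rt p m 3 →+* P) (Xp : P)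
    (hXiot : ∀ r, Xp * iot r = iot (Th p m 3 theta r) * Xp)
    (hPrep : ∀ g : P, ∃! c : ℕ →₀ Rt p m 3, g = spoly iot Xp c)
    {Pf : Type*} [Ring Pf] (iotf : Fq p m →+* Pf) (Xf : Pf)
    (hXiotf : ∀ a, Xf * iotf a = iotf (theta a) * Xf)
    (hPfrep : ∀ g : Pf, ∃! c : ℕ →₀ Fq p m, g = spoly iotf Xf c)
    {Q : Type*} [Ring Q] (piQ : P →+* Q) (hpiQ : Function.Surjective piQ)
    (hkerQ : RingHom.ker piQ = Ideal.span {Xp ^ p ^ s - iot (lamOf p m 3 lc)})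
    {Qf : Type*} [Ring Qf] (pif : Pf →+* Qf) (hpif : Function.Surjective pif)
    (hkerf : RingHom.ker pif = Ideal.span {(iotf ((lc 0 ^ p ^ (m - s % m))⁻¹) * Xf - 1) ^ p ^ s})
    (nu : P →+* Pf) (hnu1 : ∀ r, nu (iot r) = iotf (rdc p m 3 (by norm_num) r)) (hnu2 : nu Xp = Xf)
    (mu : Q →+* Qf) (hmu : ∀ c : P, mu (piQ c) = pif (nu c))
    (bc1 bc2 gc1 gc2 gc3 : ℕ →₀ Fq p m)
    (hb1 : InB p m iotf Xf ((iotf ((lc 0 ^ p ^ (m - s % m))⁻¹) * Xf - 1) ^ p ^ s) (p ^ s) bc1) (hb2 : InB p m iotf Xf ((iotf ((lc 0 ^ p ^ (m - s % m))⁻¹) * Xf - 1) ^ p ^ s) (p ^ s) bc2)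
    (hside : ∀ cc c2 : ℕ →₀ Fq p m,
      uQ p m 3 iot piQ * lQ p m 3 iot Xp piQ cc + uQ p m 3 iot piQ ^ 2 * lQ p m 3 iot Xp piQ c2 ∈ Ideal.span {lQ p m 3 iot Xp piQ bc1 + uQ p m 3 iot piQ * lQ p m 3 iot Xp piQ gc1 + uQ p m 3 iot piQ ^ 2 * lQ p m 3 iot Xp piQ gc2} → RDvdC p m iotf Xf pif bc2 cc) :
    ⇑mu '' {c : Q | c * uQ p m 3 iot piQ ∈
        Ideal.span {lQ p m 3 iot Xp piQ bc1 + uQ p m 3 iot piQ * lQ p m 3 iot Xp piQ gc1 + uQ p m 3 iot piQ ^ 2 * lQ p m 3 iot Xp piQ gc2} ⊔ Ideal.span {uQ p m 3 iot piQ * lQ p m 3 iot Xp piQ bc2 + uQ p m 3 iot piQ ^ 2 * lQ p m 3 iot Xp piQ gc3}} =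
      {y : Qf | ∃ h : Qf, y = h * lQf p m iotf Xf pif bc2} := by
  classical
  have hPrep' : ∀ g : P, ∃ c : ℕ →₀ Rt p m 3, g = spoly iot Xp c := fun g => (hPrep g).exists
  have hmuL : ∀ c : ℕ →₀ Fq p m,
      mu (lQ p m 3 iot Xp piQ c) = lQf p m iotf Xf pif c := fun c =>
    mu_lQ p m 3 iot Xp piQ iotf Xf pif (by norm_num) nu hnu1 hnu2 mu hmu c
  have hmuU : mu (uQ p m 3 iot piQ) = 0 :=
    mu_uQ p m 3 iot piQ iotf pif (by norm_num) nu hnu1 mu hmu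
  have hcen : ∀ q : Q, uQ p m 3 iot piQ * q = q * uQ p m 3 iot piQ := fun q =>
    uQ_central p m 3 theta iot Xp hXiot hPrep' piQ hpiQ q
  have hdec : ∀ q : Q, ∃ (c : ℕ →₀ Fq p m) (r : Q),
      q = lQ p m 3 iot Xp piQ c + uQ p m 3 iot piQ * r := fun q =>
    decompQ p m iot Xp hPrep' piQ hpiQ q
  set u := uQ p m 3 iot piQ with hu
  set B1 := lQ p m 3 iot Xp piQ bc1 with hB1
  set B2 := lQ p m 3 iot Xp piQ bc2 with hB2
  set Lg1 := lQ p m 3 iot Xp piQ gc1 with hLg1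
  set Lg2 := lQ p m 3 iot Xp piQ gc2 with hLg2
  set Lg3 := lQ p m 3 iot Xp piQ gc3 with hLg3
  have hswap : ∀ z w : Q, z * (u * w) = u * (z * w) := fun z w => by
    rw [← mul_assoc, ← hcen z, mul_assoc]
  have hu3 : ∀ z : Q, u * (u * (u * z)) = 0 := fun z => by
    have : u * (u * u) = 0 := by
      rw [hu, uQ, ← map_mul, ← map_mul, ← map_mul, ← map_mul, uE_pow_three, map_zero, map_zero]
    rw [← mul_assoc] at this
    rw [← mul_assoc, ← mul_assoc, this, zero_mul]
  ext y
  simp only [Set.mem_image, Set.mem_setOf_eq]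
  constructor
  · rintro ⟨c, hc, rfl⟩
    rw [Submodule.mem_sup] at hc
    obtain ⟨x, hx, z, hz, hxz⟩ := hc
    rw [Ideal.span, Submodule.mem_span_singleton] at hx hz
    obtain ⟨a, rfl⟩ := hx
    obtain ⟨b, rfl⟩ := hz
    simp only [smul_eq_mul] at hxz
    set q := c - b * B2 - u * (b * Lg3) with hqdef
    have hbG2 : b * (u * B2 + u ^ 2 * Lg3) = u * (b * B2) + u * (u * (b * Lg3)) := by
      rw [mul_add, pow_two, mul_assoc u u Lg3, hswap b, hswap b, hswap b]
    have huq : u * q = a * (B1 + u * Lg1 + u ^ 2 * Lg2) := by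
      have h1 : u * q = c * u - b * (u * B2 + u ^ 2 * Lg3) := by
        rw [hqdef, mul_sub, mul_sub, hcen c, hbG2, sub_sub]
      rw [h1, ← hxz, add_sub_cancel_right]
    obtain ⟨q0, r, hqd⟩ := hdec q
    obtain ⟨q1, r', hrd⟩ := hdec r
    have hmem : u * lQ p m 3 iot Xp piQ q0 + u ^ 2 * lQ p m 3 iot Xp piQ q1 ∈
        Ideal.span {B1 + u * Lg1 + u ^ 2 * Lg2} := by
      have heq : u * lQ p m 3 iot Xp piQ q0 + u ^ 2 * lQ p m 3 iot Xp piQ q1 = u * q := by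
        rw [hqd, hrd, mul_add, mul_add, mul_add, hu3, add_zero, pow_two, mul_assoc]
      rw [heq, huq, Ideal.span]
      exact Submodule.mem_span_singleton.mpr ⟨a, by rw [smul_eq_mul]⟩
    obtain ⟨h, hh⟩ := hside q0 q1 hmem
    refine ⟨h + mu b, ?_⟩
    have hmc : mu c = mu q + mu b * lQf p m iotf Xf pif bc2 := by
      have : c = q + b * B2 + u * (b * Lg3) := by rw [hqdef]; abel
      rw [this, map_add, map_add, map_mul, map_mul, hmuU, zero_mul, add_zero, hB2, hmuL]
    have hmq : mu q = h * lQf p m iotf Xf pif bc2 := by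
      rw [hqd, map_add, map_mul, hmuU, zero_mul, add_zero, hmuL, ← hh]
    rw [hmc, hmq, add_mul]
  · rintro ⟨h, rfl⟩
    obtain ⟨gf, hgf⟩ := hpif h
    obtain ⟨e, he, -⟩ := hPfrep gf
    set c' := lQ p m 3 iot Xp piQ e with hc'
    have hmc' : mu c' = h := by rw [hc', hmuL, lQf, ← he, hgf]
    refine ⟨c' * B2 + u * (c' * Lg3), ?_, ?_⟩
    · have hcu : (c' * B2 + u * (c' * Lg3)) * u = c' * (u * B2 + u ^ 2 * Lg3) := by
        rw [add_mul, mul_add, pow_two, mul_assoc u u Lg3, hswap c', hswap c',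
          mul_assoc, ← hcen B2, mul_assoc u (c' * Lg3) u, ← hcen (c' * Lg3), hswap c',
          hswap c']
      rw [hcu]
      refine Submodule.mem_sup_right ?_
      rw [Ideal.span]
      exact Submodule.mem_span_singleton.mpr ⟨c', by rw [smul_eq_mul]⟩
    · rw [map_add, map_mul, map_mul, hmuU, zero_mul, add_zero, hmc', hB2, hmuL]

end SkewPaper
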